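/- arXiv:0710.0431 — 6 statements merged into one kernel-verified Lean document; each statement's English description precedes it below -/
import Mathlib

section
/- The average Hamming distance d_H of a counting sequence S of length n > 1 satisfies 1 ≤ d_H ≤ n - 1/2, where the average is taken cyclically over all 2^n pairs of successive codewords. -/
/-!
Codewords one step apart are distinct, so every step costs at least `1`. For the upper bound,
a coordinate of three binary words can disagree in at most two of the three pairs, so
`d(a,b) + d(b,c) ≤ 2n - d(a,c)`; as codewords two steps apart are distinct, two consecutive
steps cost at most `2n - 1`, and summing over the cycle counts every step twice.
-/

open Finset Function

theorem hammingDist_add_hammingDist_add_hammingDist_le {ι : Type*} [Fintype ι]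
    (a b c : ι → Bool) :
    hammingDist a b + hammingDist b c + hammingDist a c ≤ 2 * Fintype.card ι := by
  simp only [hammingDist, card_filter, ← sum_add_distrib, Fintype.card_eq_sum_ones, mul_sum]
  refine sum_le_sum fun i _ => ?_
  cases a i <;> cases b i <;> cases c i <;> decide

section CyclicSequence

variable {G ι : Type*} [AddGroup G] [Fintype G] [Fintype ι] {x : G → ι → Bool}

theorem card_le_sum_hammingDist_add (hx : Injective x) {g : G} (hg : g ≠ 0) :
    Fintype.card G ≤ ∑ k, hammingDist (x k) (x (k + g)) := by
  rw [Fintype.card_eq_sum_ones]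
  exact sum_le_sum fun k _ => hammingDist_pos.2 <| hx.ne <| by simpa using hg

theorem two_mul_sum_hammingDist_add_le (hx : Injective x) {g : G} (hg : g + g ≠ 0) :
    2 * ∑ k, hammingDist (x k) (x (k + g)) ≤ Fintype.card G * (2 * Fintype.card ι - 1) := by
  have hshift : ∑ k, hammingDist (x (k + g)) (x (k + g + g)) =
      ∑ k, hammingDist (x k) (x (k + g)) :=
    Fintype.sum_equiv (Equiv.addRight g) _ _ fun _ => rfl
  rw [two_mul]
  nth_rw 2 [← hshift]
  rw [← sum_add_distrib, Fintype.card_eq_sum_ones, sum_mul, one_mul]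
  refine sum_le_sum fun k _ => ?_
  have hpos : 0 < hammingDist (x k) (x (k + g + g)) :=
    hammingDist_pos.2 <| hx.ne <| by simpa [add_assoc] using hg
  have := hammingDist_add_hammingDist_add_hammingDist_le (x k) (x (k + g)) (x (k + g + g))
  omega

end CyclicSequence

/-- The average cyclic Hamming distance of any counting sequence of
length `n > 1` (a cyclic listing of all `2^n` binary `n`-tuples) lies between `1`
and `n - 1/2`. -/
theorem avg_hamming_dist_bounds (n : ℕ) (hn : 1 < n)
    (x : Fin (2^n) → Fin n → Bool) (hx : Function.Bijective x) :
    1 ≤ (∑ k : Fin (2^n), (hammingDist (x k) (x (k+1)) : ℚ)) / 2^n ∧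
    (∑ k : Fin (2^n), (hammingDist (x k) (x (k+1)) : ℚ)) / 2^n ≤ (n : ℚ) - 1/2 := by
  have h4 : 4 ≤ 2 ^ n := Nat.pow_le_pow_right two_pos hn
  have hone : (1 : Fin (2^n)) ≠ 0 := by
    simp [Fin.ext_iff, Nat.mod_eq_of_lt (by omega : 1 < 2^n)]
  have htwo : (1 + 1 : Fin (2^n)) ≠ 0 := by
    simp [Fin.ext_iff, Fin.val_add, Nat.mod_eq_of_lt (by omega : 1 < 2^n),
      Nat.mod_eq_of_lt (by omega : 2 < 2^n)]
  have hlow := card_le_sum_hammingDist_add hx.injective hone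
  have hup := two_mul_sum_hammingDist_add_le hx.injective htwo
  simp only [Fintype.card_fin] at hlow hup
  rw [le_div_iff₀ (by positivity), div_le_iff₀ (by positivity)]
  constructor
  · exact_mod_cast (one_mul (2 ^ n)).le.trans hlow
  · have hup' := (Nat.cast_le (α := ℚ)).2 hup
    push_cast [Nat.cast_sub (by omega : 1 ≤ 2 * n)] at hup'
    linarith
end

section
/- For every n > 1 there exists a maximum counting sequence, i.e., a counting sequence of length n whose average (cyclic) Hamming distance equals n - 1/2. -/
/-!
Let `g₀, …, g_{N-1}` (`N = 2^(n-1)`) be a cyclic Gray code on `n - 1` bits, so cyclically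
consecutive words differ in exactly one bit. List the words `(0, gᵢ)` of length `n`, each
followed by its complement. A word and its complement are at distance `n`, and the complement
of `(0, gᵢ)` is at distance `n - 1` from `(0, gᵢ₊₁)`, since `gᵢ` and `gᵢ₊₁` agree in all but one
bit. The `2^n` distances therefore alternate between `n` and `n - 1`, with average `n - 1/2`.
The Gray code is the binary reflected one, `i ↦ i xor ⌊i/2⌋`.
-/

open Finset Function

def gray (i : ℕ) : ℕ := i ^^^ i / 2

theorem gray_xor (a b : ℕ) : gray (a ^^^ b) = gray a ^^^ gray b := by
  rw [gray, gray, gray, Nat.xor_div_two]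
  ac_rfl

theorem eq_zero_of_gray_eq_zero {c : ℕ} (h : gray c = 0) : c = 0 := by
  have := Nat.eq_of_xor_eq_zero h
  omega

theorem gray_injective : Injective gray := fun a b h => by
  have := gray_xor a b
  rw [h, Nat.xor_self] at this
  exact Nat.eq_of_xor_eq_zero (eq_zero_of_gray_eq_zero this)

theorem gray_lt_two_pow {i m : ℕ} (h : i < 2 ^ m) : gray i < 2 ^ m :=
  Nat.xor_lt_two_pow h (lt_of_le_of_lt (Nat.div_le_self _ _) h)

theorem gray_two_pow_sub_one (t : ℕ) : gray (2 ^ (t + 1) - 1) = 2 ^ t := by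
  apply Nat.eq_of_testBit_eq
  intro j
  simp only [gray, Nat.testBit_xor, Nat.testBit_div_two, Nat.testBit_two_pow_sub_one,
    Nat.testBit_two_pow]
  rcases lt_trichotomy j t with h | rfl | h
  · simp [h, h.ne', h.le]
  · simp
  · simp [h.ne, h.not_gt, show ¬ j < t + 1 by omega]

theorem exists_xor_add_one_eq_two_pow_sub_one (i : ℕ) :
    ∃ t, i ^^^ (i + 1) = 2 ^ (t + 1) - 1 := by
  induction i using Nat.binaryRec with
  | zero => exact ⟨0, rfl⟩
  | bit b i ih =>
    cases b
    · refine ⟨0, ?_⟩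
      rw [show Nat.bit false i + 1 = Nat.bit true i by simp [Nat.bit_val], Nat.xor_bit]
      simp [Nat.bit_val]
    · obtain ⟨t, ht⟩ := ih
      refine ⟨t + 1, ?_⟩
      rw [show Nat.bit true i + 1 = Nat.bit false (i + 1) by simp [Nat.bit_val]; ring,
        Nat.xor_bit, ht, Nat.bit_val]
      have : 1 ≤ 2 ^ (t + 1) := Nat.one_le_two_pow
      change 2 * (2 ^ (t + 1) - 1) + 1 = 2 ^ (t + 1 + 1) - 1
      rw [pow_succ 2 (t + 1)]
      omega

theorem exists_gray_xor_gray_add_one (i : ℕ) : ∃ t, gray i ^^^ gray (i + 1) = 2 ^ t := by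
  obtain ⟨t, ht⟩ := exists_xor_add_one_eq_two_pow_sub_one i
  exact ⟨t, by rw [← gray_xor, ht, gray_two_pow_sub_one]⟩

theorem exists_gray_xor_gray_succ_mod {m i : ℕ} (hi : i < 2 ^ (m + 1)) :
    ∃ t, gray i ^^^ gray ((i + 1) % 2 ^ (m + 1)) = 2 ^ t := by
  rcases Nat.lt_or_ge (i + 1) (2 ^ (m + 1)) with h | h
  · rw [Nat.mod_eq_of_lt h]
    exact exists_gray_xor_gray_add_one i
  · obtain rfl : i = 2 ^ (m + 1) - 1 := by omega
    refine ⟨m, ?_⟩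
    rw [Nat.sub_add_cancel Nat.one_le_two_pow, Nat.mod_self, gray_two_pow_sub_one]
    simp [gray]

def lowBits (m a : ℕ) : Fin m → Bool := fun j => a.testBit j

theorem lowBits_injOn (m : ℕ) : Set.InjOn (lowBits m) (Set.Iio (2 ^ m)) := by
  intro a ha b hb h
  apply Nat.eq_of_testBit_eq
  intro j
  by_cases hj : j < m
  · exact congrFun h ⟨j, hj⟩
  · have hle : 2 ^ m ≤ 2 ^ j := Nat.pow_le_pow_right two_pos (by omega)
    rw [Nat.testBit_lt_two_pow (lt_of_lt_of_le ha hle),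
      Nat.testBit_lt_two_pow (lt_of_lt_of_le hb hle)]

theorem hammingDist_lowBits_of_xor_eq_two_pow {m a b t : ℕ} (ha : a < 2 ^ m) (hb : b < 2 ^ m)
    (h : a ^^^ b = 2 ^ t) : hammingDist (lowBits m a) (lowBits m b) = 1 := by
  have ht : t < m := by
    rw [← Nat.pow_lt_pow_iff_right (by norm_num : 1 < 2), ← h]
    exact Nat.xor_lt_two_pow ha hb
  rw [hammingDist, card_eq_one]
  refine ⟨⟨t, ht⟩, ?_⟩
  ext j
  have := congrArg (Nat.testBit · j) h
  simp only [Nat.testBit_xor, Nat.testBit_two_pow] at this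
  rw [mem_filter_univ, mem_singleton, Fin.ext_iff, eq_comm, ← decide_eq_true_iff (p := t = _),
    ← this]
  simp [lowBits]

def grayCode (m : ℕ) (k : Fin (2 ^ m)) : Fin m → Bool := lowBits m (gray k)

theorem grayCode_injective (m : ℕ) : Injective (grayCode m) := fun k l h =>
  Fin.ext <| gray_injective <| lowBits_injOn m (gray_lt_two_pow k.isLt) (gray_lt_two_pow l.isLt) h

theorem hammingDist_grayCode_add_one (m : ℕ) (k : Fin (2 ^ (m + 1))) :
    hammingDist (grayCode (m + 1) k) (grayCode (m + 1) (k + 1)) = 1 := by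
  obtain ⟨t, ht⟩ := exists_gray_xor_gray_succ_mod k.isLt
  have hval : ((k + 1 : Fin (2 ^ (m + 1))) : ℕ) = (k + 1) % 2 ^ (m + 1) := by simp [Fin.val_add]
  exact hammingDist_lowBits_of_xor_eq_two_pow (gray_lt_two_pow k.isLt)
    (gray_lt_two_pow (k + 1).isLt) (hval ▸ ht)

theorem hammingDist_not_add_hammingDist {ι : Type*} [Fintype ι] (x y : ι → Bool) :
    hammingDist x (fun i => !y i) + hammingDist x y = Fintype.card ι := by
  simp only [hammingDist, Bool.ne_not, ne_eq]
  exact card_filter_add_card_filter_not _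

theorem hammingDist_xor_not_xor_add_hammingDist {ι : Type*} [Fintype ι] (p : Bool)
    (x y : ι → Bool) :
    hammingDist (fun i => p ^^ x i) (fun i => !p ^^ y i) + hammingDist x y = Fintype.card ι := by
  cases p
  · simpa using hammingDist_not_add_hammingDist x y
  · simpa [hammingDist_comm _ y] using hammingDist_not_add_hammingDist y x

theorem hammingDist_cons_cons {m : ℕ} {β : Type*} [DecidableEq β] (a : β) (u v : Fin m → β) :
    hammingDist (Fin.cons a u : Fin (m + 1) → β) (Fin.cons a v) = hammingDist u v := by
  simp [hammingDist, card_filter, Fin.sum_univ_succ]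

theorem Nat.bodd_mod_of_even {a M : ℕ} (hM : Even M) : (a % M).bodd = a.bodd := by
  have := Nat.mod_mod_of_dvd a (even_iff_two_dvd.mp hM)
  rw [Nat.mod_two_of_bodd, Nat.mod_two_of_bodd] at this
  cases h₁ : (a % M).bodd <;> cases h₂ : a.bodd <;> simp_all

theorem Nat.sum_range_two_mul_bodd_toNat (N : ℕ) : ∑ k ∈ range (2 * N), k.bodd.toNat = N := by
  induction N with
  | zero => simp
  | succ N ih =>
    rw [show 2 * (N + 1) = 2 * N + 1 + 1 by ring, sum_range_succ, sum_range_succ, ih]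
    simp

section Doubling

variable {m N M : ℕ} [NeZero N] [NeZero M]

def doubleWithComplements (g : Fin N → Fin m → Bool) (k : Fin M) : Fin (m + 1) → Bool :=
  fun i => (k : ℕ).bodd ^^ (Fin.cons false (g (Fin.ofNat N (k / 2))) : Fin (m + 1) → Bool) i

theorem Fin.bodd_val_add_one (hM : Even M) (k : Fin M) :
    ((k + 1 : Fin M) : ℕ).bodd = !(k : ℕ).bodd := by
  rw [Fin.val_add, Fin.val_one', Nat.add_mod_mod, Nat.bodd_mod_of_even hM, Nat.bodd_succ]

theorem Fin.ofNat_val_add_one_div_two (hM : M = 2 * N) (k : Fin M) :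
    Fin.ofNat N ((k + 1 : Fin M) / 2) = Fin.ofNat N (k / 2) + Fin.ofNat N (k : ℕ).bodd.toNat := by
  have hhalf : ((k : ℕ) + 1) / 2 = (k : ℕ) / 2 + (k : ℕ).bodd.toNat := by
    have := Nat.mod_two_of_bodd k
    omega
  have hmod : ((k : ℕ) + 1) % M / 2 = ((k : ℕ) + 1) / 2 % N := by
    subst hM
    exact Nat.mod_mul_right_div_self _ _ _
  rw [Fin.val_add, Fin.val_one', Nat.add_mod_mod, hmod, hhalf]
  ext
  simp [Fin.val_add]

variable {g : Fin N → Fin m → Bool}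

theorem hammingDist_doubleWithComplements_add_one (hM : M = 2 * N)
    (hg : ∀ k, hammingDist (g k) (g (k + 1)) = 1) (k : Fin M) :
    hammingDist (doubleWithComplements g k) (doubleWithComplements g (k + 1)) + (k : ℕ).bodd.toNat
      = m + 1 := by
  have hstep : hammingDist (Fin.cons false (g (Fin.ofNat N (k / 2))) : Fin (m + 1) → Bool)
      (Fin.cons false (g (Fin.ofNat N ((k + 1 : Fin M) / 2)))) = (k : ℕ).bodd.toNat := by
    rw [hammingDist_cons_cons, Fin.ofNat_val_add_one_div_two hM]
    cases (k : ℕ).bodd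
    · simp
    · exact hg _
  unfold doubleWithComplements
  rw [← hstep, Fin.bodd_val_add_one ⟨N, by omega⟩, hammingDist_xor_not_xor_add_hammingDist,
    Fintype.card_fin]

omit [NeZero M] in
theorem doubleWithComplements_injective (hM : M = 2 * N) (hg : Injective g) :
    Injective (doubleWithComplements (M := M) g) := by
  intro k l h
  have hodd : (k : ℕ).bodd = (l : ℕ).bodd := by simpa [doubleWithComplements] using congrFun h 0
  have hhalf : Fin.ofNat N (k / 2) = Fin.ofNat N (l / 2) := by
    apply hg
    funext j
    simpa [doubleWithComplements, hodd] using congrFun h j.succ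
  have hk := k.isLt
  have hl := l.isLt
  have hdiv := congrArg Fin.val hhalf
  have hmod := congrArg Bool.toNat hodd
  rw [Fin.val_ofNat, Fin.val_ofNat, Nat.mod_eq_of_lt (by omega), Nat.mod_eq_of_lt (by omega)]
    at hdiv
  rw [← Nat.mod_two_of_bodd, ← Nat.mod_two_of_bodd] at hmod
  exact Fin.ext (by omega)

theorem sum_hammingDist_doubleWithComplements (hM : M = 2 * N)
    (hg : ∀ k, hammingDist (g k) (g (k + 1)) = 1) :
    ∑ k : Fin M, hammingDist (doubleWithComplements g k) (doubleWithComplements g (k + 1))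
      = N * (2 * m + 1) := by
  have hsum : ∑ k : Fin M, (hammingDist (doubleWithComplements g k)
      (doubleWithComplements g (k + 1)) + (k : ℕ).bodd.toNat) = ∑ _k : Fin M, (m + 1) :=
    sum_congr rfl fun k _ => hammingDist_doubleWithComplements_add_one hM hg k
  have hodd : ∑ k : Fin M, (k : ℕ).bodd.toNat = N := by
    rw [Fin.sum_univ_eq_sum_range (fun k => k.bodd.toNat), hM, Nat.sum_range_two_mul_bodd_toNat]
  rw [sum_add_distrib, hodd, sum_const, card_univ, Fintype.card_fin, smul_eq_mul] at hsum
  subst hM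
  linarith

end Doubling

/-- For every `n > 1` there exists a maximum counting sequence, i.e. a
cyclic listing of all `2^n` binary `n`-tuples whose average cyclic Hamming distance
equals `n - 1/2`. -/
theorem exists_maximum_counting_sequence (n : ℕ) (hn : 1 < n) :
    ∃ x : Fin (2^n) → Fin n → Bool, Function.Bijective x ∧
      (∑ k : Fin (2^n), (hammingDist (x k) (x (k+1)) : ℚ)) / 2^n = (n : ℚ) - 1/2 := by
  obtain ⟨m, rfl⟩ : ∃ m, n = m + 2 := ⟨n - 2, by omega⟩
  have hM : 2 ^ (m + 2) = 2 * 2 ^ (m + 1) := by ring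
  refine ⟨doubleWithComplements (grayCode (m + 1)), ?_, ?_⟩
  · rw [Fintype.bijective_iff_injective_and_card]
    exact ⟨doubleWithComplements_injective hM (grayCode_injective _), by simp⟩
  · rw [← Nat.cast_sum,
      sum_hammingDist_doubleWithComplements hM (hammingDist_grayCode_add_one _)]
    push_cast
    field_simp
    ring
end

section
/- In any counting sequence of length n > 1 achieving the maximum average Hamming distance n - 1/2, the Hamming distances between successive codewords alternate between n and n - 1. -/
/-!
Every distance is at most `n`, and two consecutive distances cannot both equal `n`: over `Bool`
that would force `x k = x (k + 2)`, impossible for an injective cycle of length `2^n > 2`.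
So each sum of two consecutive distances is at most `2n - 1`. These `2^n` pair sums add up to
twice the total, which the average pins to `2^n (2n - 1)`, so every pair sum is exactly `2n - 1`.
-/

open Finset

lemma hammingDist_eq_card_iff {ι : Type*} [Fintype ι] {β : ι → Type*} [∀ i, DecidableEq (β i)]
    {x y : ∀ i, β i} : hammingDist x y = Fintype.card ι ↔ ∀ i, x i ≠ y i := by
  rw [hammingDist, ← card_univ, card_filter_eq_iff]
  simp

lemma Bool.hammingDist_add_hammingDist_lt_of_ne {ι : Type*} [Fintype ι] {x y z : ι → Bool}
    (hxz : x ≠ z) : hammingDist x y + hammingDist y z < 2 * Fintype.card ι := by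
  have hxy : hammingDist x y ≤ Fintype.card ι := hammingDist_le_card_fintype
  have hyz : hammingDist y z ≤ Fintype.card ι := hammingDist_le_card_fintype
  by_contra hfull
  have hxy' := hammingDist_eq_card_iff.1 (show hammingDist x y = Fintype.card ι by omega)
  have hyz' := hammingDist_eq_card_iff.1 (show hammingDist y z = Fintype.card ι by omega)
  refine hxz (funext fun i => ?_)
  have hi := hxy' i
  have hi' := hyz' i
  revert hi hi'
  cases x i <;> cases y i <;> cases z i <;> simp

lemma add_apply_add_right_eq_of_two_mul_sum_eq {G : Type*} [AddGroup G] [Fintype G]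
    (f : G → ℕ) (g : G) {c : ℕ} (hle : ∀ k, f k + f (k + g) ≤ c)
    (hsum : 2 * ∑ k, f k = Fintype.card G * c) (k : G) : f k + f (k + g) = c := by
  have hshift : ∑ k, f (k + g) = ∑ k, f k := Fintype.sum_equiv (Equiv.addRight g) _ _ fun _ => rfl
  have htotal : ∑ k, (f k + f (k + g)) = ∑ _k : G, c := by
    rw [sum_add_distrib, hshift, sum_const, card_univ, smul_eq_mul, ← two_mul, hsum]
  exact (sum_eq_sum_iff_of_le fun k _ => hle k).1 htotal k (mem_univ k)

lemma Fin.add_two_ne_self {m : ℕ} [NeZero m] (hm : 2 < m) (k : Fin m) : k + 2 ≠ k := by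
  rw [ne_eq, add_eq_left, Fin.ext_iff, Fin.coe_ofNat_eq_mod, Nat.mod_eq_of_lt hm]
  simp

lemma Fin.add_two_eq_add_one_add_one {m : ℕ} [NeZero m] (k : Fin m) : k + 2 = k + 1 + 1 := by
  rw [add_assoc]
  exact Fin.ext (by simp [Fin.val_add])

/-- In any counting sequence of length `n > 1` achieving the maximum
average Hamming distance `n - 1/2`, the successive Hamming distances alternate
between `n` and `n - 1`. -/
theorem maximum_counting_sequence_alternates (n : ℕ) (hn : 1 < n)
    (x : Fin (2^n) → Fin n → Bool) (hx : Function.Bijective x)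
    (havg : (∑ k : Fin (2^n), (hammingDist (x k) (x (k+1)) : ℚ)) / 2^n = (n : ℚ) - 1/2) :
    ∀ k : Fin (2^n),
      (hammingDist (x k) (x (k+1)) = n ∧ hammingDist (x (k+1)) (x (k+2)) = n - 1) ∨
      (hammingDist (x k) (x (k+1)) = n - 1 ∧ hammingDist (x (k+1)) (x (k+2)) = n) := by
  set d : Fin (2^n) → ℕ := fun k => hammingDist (x k) (x (k+1))
  have hd_le : ∀ k, d k ≤ n := fun k => hammingDist_le_card_fintype.trans_eq (Fintype.card_fin n)
  have hsum : 2 * ∑ k, d k = 2^n * (2 * n - 1) := by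
    rw [div_eq_iff (by positivity)] at havg
    have : 1 ≤ 2 * n := by omega
    qify [this]
    linarith
  have hlen : 2 < 2^n := Nat.lt_of_lt_of_le (by norm_num) (Nat.pow_le_pow_right two_pos hn)
  have hpair_le : ∀ k, d k + d (k + 1) ≤ 2 * n - 1 := fun k => by
    have hne : x k ≠ x (k + 1 + 1) := fun h => Fin.add_two_ne_self hlen k
      (Fin.add_two_eq_add_one_add_one k ▸ hx.injective h).symm
    have := Bool.hammingDist_add_hammingDist_lt_of_ne (y := x (k + 1)) hne
    rw [Fintype.card_fin] at this
    exact Nat.le_sub_one_of_lt this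
  have hpair := add_apply_add_right_eq_of_two_mul_sum_eq d 1 hpair_le (by simpa using hsum)
  intro k
  rw [Fin.add_two_eq_add_one_add_one]
  have hk := hpair k
  have hk_le := hd_le k
  have hk1_le := hd_le (k + 1)
  change (d k = n ∧ d (k + 1) = n - 1) ∨ (d k = n - 1 ∧ d (k + 1) = n)
  omega
end

section
/- There exists no counting sequence x_0, x_1, ..., x_{p-1} (with p = 2^n, n ≥ 1) such that the cyclic Hamming distance d_H(x_{k mod p}, x_{(k+1) mod p}) equals a fixed even number l for all k. -/
/-!
Modulo 2, the Hamming distance of two binary tuples is the difference of their parities (numbers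
of `true` entries). Steps of even length therefore preserve parity, so every term of the sequence has
the parity of the first one; but a counting sequence runs through the all-`false` tuple and a tuple
with a single `true`, whose parities differ.
-/

open Finset

theorem ZMod.hammingNorm_cast_eq_sum {ι : Type*} [Fintype ι] (z : ι → ZMod 2) :
    (hammingNorm z : ZMod 2) = ∑ i, z i := by
  have hz : ∀ i, z i ≠ 0 → z i = 1 := by intro i; generalize z i = a; revert a; decide
  rw [hammingNorm, ← sum_filter_ne_zero, sum_congr rfl fun i hi => hz i (mem_filter.1 hi).2]
  simp

def boolParity {ι : Type*} [Fintype ι] (v : ι → Bool) : ZMod 2 :=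
  ∑ i, ((v i).toNat : ZMod 2)

theorem hammingDist_cast_eq_boolParity_sub {ι : Type*} [Fintype ι] (x y : ι → Bool) :
    (hammingDist x y : ZMod 2) = boolParity x - boolParity y := by
  have hinj : ∀ _ : ι, Function.Injective (fun b : Bool => (b.toNat : ZMod 2)) := by
    intro _ a b; cases a <;> cases b <;> decide
  rw [hammingDist_comm, ← hammingDist_comp _ hinj, hammingDist_eq_hammingNorm,
    ZMod.hammingNorm_cast_eq_sum, boolParity, boolParity]
  simp only [Pi.add_apply, Pi.neg_apply, sum_add_distrib, sum_neg_distrib]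
  ring

theorem even_hammingDist_iff_boolParity_eq {ι : Type*} [Fintype ι] (x y : ι → Bool) :
    Even (hammingDist x y) ↔ boolParity x = boolParity y := by
  rw [← ZMod.natCast_eq_zero_iff_even, hammingDist_cast_eq_boolParity_sub, sub_eq_zero]

theorem hammingDist_update_self {ι : Type*} [Fintype ι] [DecidableEq ι] {β : ι → Type*}
    [∀ i, DecidableEq (β i)] (v : ∀ i, β i) (i : ι) {b : β i} (hb : b ≠ v i) :
    hammingDist (Function.update v i b) v = 1 := by
  rw [hammingDist, card_eq_one]
  refine ⟨i, ?_⟩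
  ext j
  by_cases hj : j = i
  · subst hj; simp [hb]
  · simp [hj]

theorem Fin.apply_eq_apply_zero_of_apply_add_one {α : Type*} {m : ℕ} [NeZero m] (f : Fin m → α)
    (h : ∀ k, f (k + 1) = f k) (k : Fin m) : f k = f 0 := by
  open Fin.NatCast in
  have hnat : ∀ j : ℕ, f j = f 0 := by
    intro j
    induction j with
    | zero => simp
    | succ j ih => rw [Nat.cast_add, Nat.cast_one, h, ih]
  simpa using hnat k

/-- There is no counting sequence (cyclic listing of all `2^n` binary
`n`-tuples, `n ≥ 1`) whose successive cyclic Hamming distances are all equal to a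
fixed even number `l`. -/
theorem no_counting_sequence_constant_even_dist (n : ℕ) (hn : 1 ≤ n) (l : ℕ) (hl : Even l) :
    ¬ ∃ x : Fin (2^n) → Fin n → Bool, Function.Bijective x ∧
        ∀ k : Fin (2^n), hammingDist (x k) (x (k+1)) = l := by
  rintro ⟨x, hx, hdist⟩
  have hparity : ∀ k, boolParity (x k) = boolParity (x 0) :=
    Fin.apply_eq_apply_zero_of_apply_add_one (boolParity ∘ x) fun k =>
      ((even_hammingDist_iff_boolParity_eq _ _).1 (hdist k ▸ hl)).symm
  let v : Fin n → Bool := fun _ => false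
  obtain ⟨a, ha⟩ := hx.2 (Function.update v ⟨0, hn⟩ true)
  obtain ⟨b, hb⟩ := hx.2 v
  have hodd : hammingDist (x a) (x b) = 1 := by
    rw [ha, hb]; exact hammingDist_update_self v _ (by decide)
  have heven : Even (hammingDist (x a) (x b)) :=
    (even_hammingDist_iff_boolParity_eq _ _).2 ((hparity a).trans (hparity b).symm)
  exact Nat.not_even_one (hodd ▸ heven)
end

section
/- Let (y_0, ..., y_{p-1}) be a cyclic Gray code on (n-1)-bit words (p = 2^{n-1}), and define the new code of length n and size 2p by (0y_0, 1Cy_1, 0y_2, 1Cy_3, ..., 1Cy_{p-1}, 0y_{p-1}, 1Cy_{p-2}, ..., 0y_1, 1Cy_0), where C denotes bitwise complement and a prefixed bit is prepended. Then any two cyclically adjacent codewords x_k, x_{(k+1) mod 2p} of the new code satisfy d_H(x_k, x_{(k+1) mod 2p}) ≥ n - 1. -/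
/-!
Write the `k`-th codeword as `(b, y_j ⊕ b)` with `b` the parity of `k` and `j = min(k, 2p-1-k)`.
Consecutive `k` have opposite parities and indices `j` at distance at most one, so `y_j` and
`y_j'` differ in at most one bit; hence `y_j ⊕ b` and `y_j' ⊕ ¬b` differ in all but at most one
of the `n - 1` positions, and the prefix bits differ as well.
-/

/-- The new counting code of length `m+1` built from a cyclic Gray code
`y` on `m`-bit words: the Gray code followed by its reversal, with every
codeword at an odd position bitwise complemented, and alternating prefix
bits `0,1,0,1,...` prepended. -/
def newCode (m : ℕ) (y : Fin (2^m) → Fin m → Bool) :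
    Fin (2 * 2^m) → Fin (m+1) → Bool := fun k =>
  Fin.cons (decide (k.val % 2 = 1))
    (fun i =>
      let j : Fin (2^m) := ⟨min k.val (2 * 2^m - 1 - k.val), by
        have hk := k.isLt
        have h1 : 1 ≤ 2^m := Nat.one_le_two_pow
        omega⟩
      if k.val % 2 = 0 then y j i else !(y j i))

lemma hammingDist_fin_cons {n : ℕ} {β : Type*} [DecidableEq β] (a b : β) (u v : Fin n → β) :
    hammingDist (Fin.cons a u : Fin (n + 1) → β) (Fin.cons b v)
      = (if a = b then 0 else 1) + hammingDist u v := by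
  simp only [hammingDist, Finset.card_filter, Fin.sum_univ_succ, Fin.cons_zero, Fin.cons_succ,
    ne_eq, ite_not]

lemma hammingDist_xor_xor_not {ι : Type*} [Fintype ι] (b : Bool) (u v : ι → Bool) :
    hammingDist (fun i => u i ^^ b) (fun i => v i ^^ !b) = Fintype.card ι - hammingDist u v := by
  have hagree : ∀ i, (u i ^^ b) ≠ (v i ^^ !b) ↔ ¬u i ≠ v i := by
    intro i; cases b <;> cases u i <;> cases v i <;> decide
  have hsplit := Finset.card_filter_add_card_filter_not (s := Finset.univ) (fun i => u i ≠ v i)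
  simp only [hammingDist, hagree, Finset.card_univ] at hsplit ⊢
  omega

lemma Fin.val_add_one_cases {n : ℕ} [NeZero n] (k : Fin n) :
    (k + 1).val = k.val + 1 ∨ (k.val + 1 = n ∧ (k + 1).val = 0) := by
  rcases (Nat.succ_le_of_lt k.isLt).lt_or_eq with h | h
  · exact .inl (Fin.val_add_one_of_lt' h)
  · have h : k.val + 1 = n := h
    refine .inr ⟨h, ?_⟩
    rw [Fin.val_add, Fin.val_one', Nat.add_mod_mod, h, Nat.mod_self]

lemma Fin.decide_val_add_one_mod_two_eq_one {N : ℕ} [NeZero N] (k : Fin (2 * N)) :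
    decide ((k + 1).val % 2 = 1) = !decide (k.val % 2 = 1) := by
  rcases Fin.val_add_one_cases k with h | ⟨h, h'⟩
  · rw [h]; cases Nat.mod_two_eq_zero_or_one k.val <;> simp [Nat.add_mod, *]
  · rw [h']; cases Nat.mod_two_eq_zero_or_one k.val <;> simp [*]; omega

lemma hammingDist_le_one_of_val_le_succ {N : ℕ} [NeZero N] {ι β : Type*} [Fintype ι]
    [DecidableEq β] (y : Fin N → ι → β) (hy : ∀ k, hammingDist (y k) (y (k + 1)) ≤ 1)
    {i j : Fin N} (hij : i.val ≤ j.val + 1) (hji : j.val ≤ i.val + 1) :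
    hammingDist (y i) (y j) ≤ 1 := by
  wlog hle : i.val ≤ j.val generalizing i j
  · rw [hammingDist_comm]; exact this hji hij (by omega)
  rcases hle.eq_or_lt with heq | hlt
  · simp [Fin.ext heq]
  · have hsucc : j = i + 1 := Fin.ext (by rcases Fin.val_add_one_cases i with h | ⟨h, _⟩ <;> omega)
    exact hsucc ▸ hy i

def foldIndex {N : ℕ} (k : Fin (2 * N)) : Fin N :=
  ⟨min k.val (2 * N - 1 - k.val), by have := k.isLt; omega⟩

lemma foldIndex_add_one_val_le {N : ℕ} [NeZero N] (k : Fin (2 * N)) :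
    (foldIndex (k + 1)).val ≤ (foldIndex k).val + 1 ∧
      (foldIndex k).val ≤ (foldIndex (k + 1)).val + 1 := by
  have := k.isLt
  rcases Fin.val_add_one_cases k with h | ⟨h, h'⟩
  · simp only [foldIndex, h]; omega
  · simp only [foldIndex, h']; omega

lemma newCode_eq_cons (m : ℕ) (y : Fin (2 ^ m) → Fin m → Bool) (k : Fin (2 * 2 ^ m)) :
    newCode m y k =
      Fin.cons (decide (k.val % 2 = 1)) (fun i => y (foldIndex k) i ^^ decide (k.val % 2 = 1)) := by
  funext i
  refine Fin.cases rfl (fun i => ?_) i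
  cases Nat.mod_two_eq_zero_or_one k.val <;> simp [newCode, foldIndex, *]

lemma le_hammingDist_cons_xor {m : ℕ} (b : Bool) {u v : Fin m → Bool} (h : hammingDist u v ≤ 1) :
    m ≤ hammingDist (Fin.cons b (fun i => u i ^^ b) : Fin (m + 1) → Bool)
      (Fin.cons (!b) (fun i => v i ^^ !b)) := by
  rw [hammingDist_fin_cons, hammingDist_xor_xor_not, Fintype.card_fin]
  cases b <;> simp <;> omega

theorem newCode_adjacent_dist_general (m : ℕ) (y : Fin (2^m) → Fin m → Bool)
    (hgray : ∀ k : Fin (2^m), hammingDist (y k) (y (k+1)) = 1) :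
    ∀ k : Fin (2 * 2^m),
      m ≤ hammingDist (newCode m y k) (newCode m y (k+1)) := by
  intro k
  rw [newCode_eq_cons, newCode_eq_cons, Fin.decide_val_add_one_mod_two_eq_one]
  obtain ⟨hle, hge⟩ := foldIndex_add_one_val_le k
  exact le_hammingDist_cons_xor _
    (hammingDist_le_one_of_val_le_succ y (fun k => (hgray k).le) hge hle)

/-- If `y` is a cyclic Gray code on `(n-1)`-bit words (here `n = m+1`),
then any two cyclically adjacent codewords of the new code have Hamming distance
at least `n - 1 = m`. -/
theorem newCode_adjacent_dist (m : ℕ) (y : Fin (2^m) → Fin m → Bool)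
    (hy : Function.Bijective y)
    (hgray : ∀ k : Fin (2^m), hammingDist (y k) (y (k+1)) = 1) :
    ∀ k : Fin (2 * 2^m),
      m ≤ hammingDist (newCode m y k) (newCode m y (k+1)) :=
  newCode_adjacent_dist_general m y hgray
end

section
/- In the new code of length n constructed from a cyclic Gray code of length n-1, d_H(x_{p-1}, x_p) = n and d_H(x_{2p-1}, x_0) = n, i.e., at the two 'mirror points' of the construction, adjacent codewords are exact bitwise complements of each other. -/
theorem hammingDist_eq_card_of_forall_ne {ι : Type*} {β : ι → Type*} [Fintype ι]
    [∀ i, DecidableEq (β i)] {a b : ∀ i, β i} (h : ∀ i, a i ≠ b i) :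
    hammingDist a b = Fintype.card ι := by
  simp [hammingDist, h]

/-- The prefix bit records the parity, and the tail is complemented exactly at odd
positions. -/
theorem newCode_ne_of_mod_two_ne {m : ℕ} (y : Fin (2^m) → Fin m → Bool)
    {k l : Fin (2 * 2^m)} (hpar : k.val % 2 ≠ l.val % 2)
    (hmirror : min k.val (2 * 2^m - 1 - k.val) = min l.val (2 * 2^m - 1 - l.val))
    (i : Fin (m+1)) : newCode m y k i ≠ newCode m y l i := by
  cases i using Fin.cases with
  | zero =>
    simp only [newCode, Fin.cons_zero, ne_eq, decide_eq_decide]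
    omega
  | succ i =>
    simp only [newCode, Fin.cons_succ, hmirror]
    rcases Nat.mod_two_eq_zero_or_one k.val with hk | hk <;>
      rcases Nat.mod_two_eq_zero_or_one l.val with hl | hl <;> simp_all

/-- At the two mirror points of the construction the adjacent
codewords of the new code are exact bitwise complements, so their Hamming
distance is `n = m+1`. -/
theorem newCode_mirror_dist (m : ℕ) (y : Fin (2^m) → Fin m → Bool) :
    hammingDist
        (newCode m y ⟨2^m - 1, by have : 1 ≤ 2^m := Nat.one_le_two_pow; omega⟩)
        (newCode m y ⟨2^m, by have : 1 ≤ 2^m := Nat.one_le_two_pow; omega⟩) = m + 1 ∧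
    hammingDist
        (newCode m y ⟨2 * 2^m - 1, by have : 1 ≤ 2^m := Nat.one_le_two_pow; omega⟩)
        (newCode m y ⟨0, by have : 1 ≤ 2^m := Nat.one_le_two_pow; omega⟩) = m + 1 := by
  have hp : 1 ≤ 2^m := Nat.one_le_two_pow
  constructor <;>
  · rw [hammingDist_eq_card_of_forall_ne (newCode_ne_of_mod_two_ne y (by dsimp only; omega)
      (by dsimp only; omega)), Fintype.card_fin]
end
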